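/- arXiv:math/9811187 — 2 statements merged into one kernel-verified Lean document; each statement's English description precedes it below -/
import Mathlib

section
/- Let k > 0 and U* = (X^k, ≤, U) be an infinite linearly ordered function assignment. Then there is an infinite uniform linearly ordered function assignment V* of the form (ℕ^k, ≤ℕ, V), where ≤ℕ is the usual linear ordering of ℕ, which is finitely conservative over U*. -/
/-- A function assignment for `α`: to each finite `A ⊆ α` it assigns a
function from `A` to `A` (values outside `A` are irrelevant). A linearly
ordered function assignment on `X^k` is a `FunAssign (Fin k → X)` together
with the ambient `LinearOrder X`. -/
structure FunAssign (α : Type*) where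
  U : Finset α → α → α
  maps : ∀ A : Finset α, ∀ x ∈ A, U A x ∈ A

/-- `RestrIso L M S T`: the restriction of the linearly ordered function
assignment `L` to `S` is order isomorphic to the restriction of `M` to `T`,
i.e. there is an order-preserving bijection `h` from `S` onto `T` which
carries each `L.U A` (for `A ⊆ S^k`) to the order isomorphic `M.U (h[A])`. -/
def RestrIso {X Y : Type*} [LinearOrder X] [LinearOrder Y] {k : ℕ}
    (L : FunAssign (Fin k → X)) (M : FunAssign (Fin k → Y))
    (S : Finset X) (T : Finset Y) : Prop :=
  ∃ h : X → Y,
    (∀ a ∈ S, ∀ b ∈ S, a < b ↔ h a < h b) ∧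
    h '' ↑S = ↑T ∧
    ∀ A : Finset (Fin k → X), (∀ x ∈ A, ∀ i, x i ∈ S) →
      ∀ B : Finset (Fin k → Y),
        ((fun x : Fin k → X => h ∘ x) '' ↑A = ↑B) →
        ∀ x ∈ A, M.U B (h ∘ x) = h ∘ (L.U A x)

/-- `L` is uniform: its restrictions to any two finite subsets of the same
cardinality are order isomorphic. -/
def Uniform {X : Type*} [LinearOrder X] {k : ℕ}
    (L : FunAssign (Fin k → X)) : Prop :=
  ∀ S T : Finset X, S.card = T.card → RestrIso L L S T

/-- `M` is finitely conservative over `L`: every finite restriction of `M` is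
order isomorphic to some finite restriction of `L`. -/
def FinConservativeOver {Y X : Type*} [LinearOrder Y] [LinearOrder X] {k : ℕ}
    (M : FunAssign (Fin k → Y)) (L : FunAssign (Fin k → X)) : Prop :=
  ∀ S : Finset Y, ∃ T : Finset X, RestrIso M L S T

/-! ### Auxiliary material: infinite Ramsey theorem -/

section Ramsey

/-- Infinite Ramsey theorem for `p`-element subsets with finitely many colors. -/
theorem my_ramsey {α C : Type*} [Finite C] :
    ∀ (p : ℕ) (c : Finset α → C) (S : Set α), S.Infinite →
      ∃ T ⊆ S, T.Infinite ∧ ∀ A B : Finset α, ↑A ⊆ T → ↑B ⊆ T →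
        A.card = p → B.card = p → c A = c B := by
  intro p
  induction p with
  | zero =>
    intro c S hS
    exact ⟨S, subset_rfl, hS, fun A B _ _ hA hB => by
      rw [Finset.card_eq_zero.mp hA, Finset.card_eq_zero.mp hB]⟩
  | succ p IH =>
    intro c S hS
    classical
    have : Nonempty α := ⟨hS.nonempty.choose⟩
    have step : ∀ S : Set α, S.Infinite → ∃ a : α, ∃ T : Set α,
        a ∈ S ∧ T ⊆ S \ {a} ∧ T.Infinite ∧
        ∀ A B : Finset α, ↑A ⊆ T → ↑B ⊆ T → A.card = p → B.card = p →
          c (insert a A) = c (insert a B) := by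
      intro S hS
      obtain ⟨a, ha⟩ := hS.nonempty
      obtain ⟨T, hT1, hT2, hT3⟩ := IH (fun A => c (insert a A)) (S \ {a})
        (hS.diff (Set.finite_singleton a))
      exact ⟨a, T, ha, hT1, hT2, hT3⟩
    choose! aF TF haF hsub hinf hhom using step
    set seq : ℕ → Set α := fun n => Nat.rec S (fun _ ih => TF ih) n with hseq
    have seqS : ∀ n, seq (n+1) = TF (seq n) := fun n => rfl
    have seqInf : ∀ n, (seq n).Infinite := by
      intro n; induction n with
      | zero => exact hS
      | succ n ih => exact hinf _ ih
    set b : ℕ → α := fun n => aF (seq n) with hb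
    have hbmem : ∀ n, b n ∈ seq n := fun n => haF _ (seqInf n)
    have hsub' : ∀ n, seq (n+1) ⊆ seq n \ {b n} := fun n => hsub _ (seqInf n)
    have hom : ∀ n, ∀ A B : Finset α, ↑A ⊆ seq (n+1) → ↑B ⊆ seq (n+1) →
        A.card = p → B.card = p →
        c (insert (b n) A) = c (insert (b n) B) := fun n => hhom _ (seqInf n)
    have mono' : ∀ m j, seq (m + j) ⊆ seq m := by
      intro m j; induction j with
      | zero => exact subset_rfl
      | succ j ih => exact ((hsub' (m+j)).trans Set.diff_subset).trans ih
    have mono : ∀ m n, m ≤ n → seq n ⊆ seq m := by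
      intro m n h
      obtain ⟨j, rfl⟩ := Nat.exists_eq_add_of_le h
      exact mono' m j
    have bmem' : ∀ m n, m < n → b n ∈ seq (m+1) := fun m n h =>
      mono (m+1) n h (hbmem n)
    have bne : ∀ m n, m < n → b n ≠ b m := by
      intro m n h he
      exact (hsub' m (bmem' m n h)).2 (by simp [he])
    have binj : Function.Injective b := by
      intro m n h
      rcases lt_trichotomy m n with h' | h' | h'
      · exact absurd h.symm (bne m n h')
      · exact h'
      · exact absurd h (bne n m h')
    have Wex : ∀ n, ∃ t : Finset α, ↑t ⊆ seq (n+1) ∧ t.card = p := fun n =>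
      (seqInf (n+1)).exists_subset_card_eq p
    choose W hW1 hW2 using Wex
    set v : ℕ → C := fun n => c (insert (b n) (W n)) with hv
    obtain ⟨y, hy⟩ := Finite.exists_infinite_fiber v
    have hIinf : (v ⁻¹' {y}).Infinite := Set.infinite_coe_iff.mp hy
    have key : ∀ A : Finset α, ↑A ⊆ b '' (v ⁻¹' {y}) → A.card = p + 1 → c A = y := by
      intro A hA hcard
      set J : Finset ℕ := A.preimage b binj.injOn with hJdef
      have hmemJ : ∀ j, j ∈ J ↔ b j ∈ A := fun j => Finset.mem_preimage
      have hbJ : J.image b = A := by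
        ext a
        simp only [Finset.mem_image]
        constructor
        · rintro ⟨j, hj, rfl⟩; exact (hmemJ j).mp hj
        · intro haA
          obtain ⟨j, _, rfl⟩ := hA haA
          exact ⟨j, (hmemJ j).mpr haA, rfl⟩
      have hJcard : J.card = p + 1 := by
        rw [← hcard, ← hbJ]
        exact (Finset.card_image_of_injective _ binj).symm
      have hJI : ∀ j ∈ J, j ∈ v ⁻¹' {y} := by
        intro j hj
        obtain ⟨i, hi, he⟩ := hA ((hmemJ j).mp hj)
        rwa [binj he] at hi
      have hJne : J.Nonempty := Finset.card_pos.mp (by omega)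
      set n := J.min' hJne with hn
      have hnJ : n ∈ J := J.min'_mem hJne
      set J' : Finset ℕ := J.erase n with hJ'
      have hJsplit : J = insert n J' := by
        rw [hJ', Finset.insert_erase hnJ]
      have hAsplit : A = insert (b n) (J'.image b) := by
        rw [← hbJ, hJsplit, Finset.image_insert]
      have hJ'sub : ↑(J'.image b) ⊆ seq (n+1) := by
        intro a ha
        simp only [Finset.coe_image, Set.mem_image, Finset.mem_coe] at ha
        obtain ⟨j, hj, rfl⟩ := ha
        have hjJ := Finset.mem_of_mem_erase hj
        have : n < j := lt_of_le_of_ne (J.min'_le j hjJ) (Ne.symm (Finset.ne_of_mem_erase hj))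
        exact bmem' n j this
      have hJ'card : (J'.image b).card = p := by
        rw [Finset.card_image_of_injective _ binj, Finset.card_erase_of_mem hnJ, hJcard]
        omega
      have := hom n (J'.image b) (W n) hJ'sub (hW1 n) hJ'card (hW2 n)
      rw [hAsplit, this]
      exact hJI n hnJ
    refine ⟨b '' (v ⁻¹' {y}), ?_, hIinf.image binj.injOn, fun A B hA hB hcA hcB => ?_⟩
    · rintro x ⟨i, _, rfl⟩
      exact mono 0 i (Nat.zero_le i) (hbmem i)
    · rw [key A hA hcA, key B hB hcB]

end Ramsey

/-! ### Abstract restriction types and colors -/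

/-- The type of "abstract restriction types" on `p` points for arity `k`. -/
abbrev CC (k p : ℕ) := (Fin k → Fin p) → Finset (Fin k → Fin p) → (Fin k → Fin p)

section Color

variable {X : Type*} [LinearOrder X] {k : ℕ} (L : FunAssign (Fin k → X))

lemma colorOf_ex {p : ℕ} (g : Fin p → X) {x : Fin k → Fin p}
    {A : Finset (Fin k → Fin p)} (hx : x ∈ A) :
    ∃ y, y ∈ A ∧ (fun i => g (y i)) =
      L.U (A.image fun v i => g (v i)) (fun i => g (x i)) := by
  have h1 : (fun i => g (x i)) ∈ A.image (fun v i => g (v i)) :=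
    Finset.mem_image_of_mem _ hx
  have h2 := L.maps _ _ h1
  rw [Finset.mem_image] at h2
  obtain ⟨y, hy1, hy2⟩ := h2
  exact ⟨y, hy1, hy2⟩

/-- The trace of `L` along an enumeration `g : Fin p → X`. -/
noncomputable def colorOf {p : ℕ} (g : Fin p → X) : CC k p := fun x A =>
  if hx : x ∈ A then (colorOf_ex L g hx).choose else x

lemma colorOf_mem {p : ℕ} (g : Fin p → X) {x : Fin k → Fin p}
    {A : Finset (Fin k → Fin p)} (hx : x ∈ A) : colorOf L g x A ∈ A := by
  rw [colorOf, dif_pos hx]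
  exact (colorOf_ex L g hx).choose_spec.1

lemma colorOf_spec {p : ℕ} (g : Fin p → X) {x : Fin k → Fin p}
    {A : Finset (Fin k → Fin p)} (hx : x ∈ A) :
    (fun i => g (colorOf L g x A i)) =
      L.U (A.image fun v i => g (v i)) (fun i => g (x i)) := by
  rw [colorOf, dif_pos hx]
  exact (colorOf_ex L g hx).choose_spec.2

/-- The color of a finite subset `P` of `X` (of purported cardinality `p`). -/
noncomputable def colF (p : ℕ) (P : Finset X) : CC k p :=
  if h : P.card = p then colorOf L (fun i => P.orderEmbOfFin h i) else fun x _ => x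

lemma colF_mem {p : ℕ} (P : Finset X) {x : Fin k → Fin p}
    {A : Finset (Fin k → Fin p)} (hx : x ∈ A) : colF L p P x A ∈ A := by
  rw [colF]
  split
  · exact colorOf_mem L _ hx
  · exact hx

lemma colF_spec {p : ℕ} (P : Finset X) (hP : P.card = p) {x : Fin k → Fin p}
    {A : Finset (Fin k → Fin p)} (hx : x ∈ A) :
    (fun i => P.orderEmbOfFin hP (colF L p P x A i)) =
      L.U (A.image fun v i => P.orderEmbOfFin hP (v i))
        (fun i => P.orderEmbOfFin hP (x i)) := by
  rw [colF, dif_pos hP]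
  exact colorOf_spec L _ hx

end Color

/-! ### The uniform assignment on ℕ determined by a family of types -/

section VV
variable {k : ℕ}

def fld (A : Finset (Fin k → ℕ)) : Finset ℕ :=
  A.biUnion fun x => Finset.image x Finset.univ

lemma mem_fld {A : Finset (Fin k → ℕ)} {x : Fin k → ℕ} (hx : x ∈ A) (i : Fin k) :
    x i ∈ fld A :=
  Finset.mem_biUnion.mpr ⟨x, hx, Finset.mem_image.mpr ⟨i, Finset.mem_univ i, rfl⟩⟩

lemma fld_mem_iff {A : Finset (Fin k → ℕ)} {a : ℕ} :
    a ∈ fld A ↔ ∃ x ∈ A, ∃ i, x i = a := by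
  simp [fld]

lemma fld_subset {A : Finset (Fin k → ℕ)} {S : Finset ℕ}
    (hA : ∀ x ∈ A, ∀ i, x i ∈ S) : fld A ⊆ S := by
  intro a ha
  obtain ⟨x, hx, i, rfl⟩ := fld_mem_iff.mp ha
  exact hA x hx i

noncomputable def enum (A : Finset (Fin k → ℕ)) (j : Fin (fld A).card) : ℕ :=
  (fld A).orderEmbOfFin rfl j

lemma enum_strictMono (A : Finset (Fin k → ℕ)) : StrictMono (enum A) :=
  ((fld A).orderEmbOfFin rfl).strictMono

lemma enum_mem (A : Finset (Fin k → ℕ)) (j) : enum A j ∈ fld A :=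
  Finset.orderEmbOfFin_mem _ _ _

noncomputable def pull (A : Finset (Fin k → ℕ)) {x : Fin k → ℕ} (hx : x ∈ A) :
    Fin k → Fin (fld A).card :=
  fun i => ((fld A).orderIsoOfFin rfl).symm ⟨x i, mem_fld hx i⟩

lemma enum_pull (A : Finset (Fin k → ℕ)) {x : Fin k → ℕ} (hx : x ∈ A) (i : Fin k) :
    enum A (pull A hx i) = x i := by
  unfold enum pull
  rw [← Finset.coe_orderIsoOfFin_apply]
  exact congrArg Subtype.val (((fld A).orderIsoOfFin rfl).apply_symm_apply _)

noncomputable def pullSet (A : Finset (Fin k → ℕ)) :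
    Finset (Fin k → Fin (fld A).card) :=
  A.attach.image fun z => pull A z.2

lemma pull_mem (A : Finset (Fin k → ℕ)) {x : Fin k → ℕ} (hx : x ∈ A) :
    pull A hx ∈ pullSet A :=
  Finset.mem_image.mpr ⟨⟨x, hx⟩, Finset.mem_attach _ _, rfl⟩

lemma pullSet_recover {A : Finset (Fin k → ℕ)} {y : Fin k → Fin (fld A).card}
    (hy : y ∈ pullSet A) : ∃ x, ∃ hx : x ∈ A, y = pull A hx := by
  rw [pullSet, Finset.mem_image] at hy
  obtain ⟨z, _, hz⟩ := hy
  exact ⟨z.1, z.2, hz.symm⟩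

/-- The function assignment on `ℕ^k` determined by a family of abstract types. -/
noncomputable def Vass (κ : ∀ q, CC k q)
    (hκ : ∀ q (x : Fin k → Fin q) (A : Finset (Fin k → Fin q)), x ∈ A → κ q x A ∈ A) :
    FunAssign (Fin k → ℕ) where
  U A x := if hx : x ∈ A then
      (fun i => enum A (κ (fld A).card (pull A hx) (pullSet A) i)) else x
  maps A x hx := by
    rw [dif_pos hx]
    have h1 : κ (fld A).card (pull A hx) (pullSet A) ∈ pullSet A :=
      hκ _ _ _ (pull_mem A hx)
    obtain ⟨z, hz, he⟩ := pullSet_recover h1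
    have : (fun i => enum A (κ (fld A).card (pull A hx) (pullSet A) i)) = z := by
      funext i; rw [he]; exact enum_pull A hz i
    rw [this]; exact hz

lemma Vass_apply (κ : ∀ q, CC k q) (hκ : ∀ q x A, x ∈ A → κ q x A ∈ A)
    {A : Finset (Fin k → ℕ)} {x : Fin k → ℕ} (hx : x ∈ A) :
    (Vass κ hκ).U A x =
      fun i => enum A (κ (fld A).card (pull A hx) (pullSet A) i) := by
  show dite _ _ _ = _
  rw [dif_pos hx]

lemma emb_congr {α : Type*} [LinearOrder α] {s t : Finset α} {m n : ℕ}
    (hs : s.card = m) (ht : t.card = n) (hst : s = t) {j : Fin m} {j' : Fin n}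
    (hj : (j : ℕ) = (j' : ℕ)) :
    s.orderEmbOfFin hs j = t.orderEmbOfFin ht j' := by
  subst hst
  have hmn : m = n := hs.symm.trans ht
  subst hmn
  have : j = j' := Fin.ext hj
  subst this
  rfl

lemma kappa_cast (κ : ∀ q, CC k q) {m n : ℕ} (e : m = n) (x : Fin k → Fin m)
    (A : Finset (Fin k → Fin m)) (i : Fin k) :
    ((κ n (fun j => Fin.cast e (x j)) (A.image fun v j => Fin.cast e (v j)) i) : ℕ) =
      ((κ m x A i : ℕ)) := by
  subst e
  have h1 : (fun j => Fin.cast rfl (x j)) = x := rfl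
  have h2 : (fun (v : Fin k → Fin m) j => Fin.cast rfl (v j)) = id := rfl
  rw [h1, h2, Finset.image_id]

lemma enum_image {Y : Type*} [LinearOrder Y] (A : Finset (Fin k → ℕ)) (h : ℕ → Y)
    (hmono : ∀ a ∈ fld A, ∀ b ∈ fld A, a < b → h a < h b)
    (hc : ((fld A).image h).card = (fld A).card) (j : Fin (fld A).card) :
    ((fld A).image h).orderEmbOfFin hc j = h (enum A j) := by
  have hsm : StrictMono (fun j : Fin (fld A).card => h (enum A j)) := by
    intro a b hab
    exact hmono _ (enum_mem A a) _ (enum_mem A b) (enum_strictMono A hab)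
  have hf : ∀ j, (OrderEmbedding.ofStrictMono _ hsm) j ∈ (fld A).image h := by
    intro j
    exact Finset.mem_image_of_mem h (enum_mem A j)
  have := Finset.orderEmbOfFin_unique' hc hf
  rw [← this]
  rfl

lemma fld_image {Y : Type*} [LinearOrder Y] (A : Finset (Fin k → ℕ)) (h : ℕ → Y)
    {B : Finset (Fin k → Y)} (hB : B = A.image fun v i => h (v i)) :
    B.biUnion (fun x => Finset.image x Finset.univ) = (fld A).image h := by
  subst hB
  ext a
  simp only [Finset.mem_biUnion, Finset.mem_image, Finset.mem_univ, true_and, fld]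
  constructor
  · rintro ⟨y, ⟨v, hv, rfl⟩, i, rfl⟩
    exact ⟨v i, ⟨v, hv, i, rfl⟩, rfl⟩
  · rintro ⟨b, ⟨v, hv, i, rfl⟩, rfl⟩
    exact ⟨fun j => h (v j), ⟨v, hv, rfl⟩, i, rfl⟩

lemma injOn_of_mono {Y : Type*} [LinearOrder Y] {F : Finset ℕ} {h : ℕ → Y}
    (hmono : ∀ a ∈ F, ∀ b ∈ F, a < b → h a < h b) : Set.InjOn h ↑F := by
  intro a ha b hb he
  rcases lt_trichotomy a b with h' | h' | h'
  · exact absurd he (ne_of_lt (hmono a ha b hb h'))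
  · exact h'
  · exact absurd he.symm (ne_of_lt (hmono b hb a ha h'))

lemma Vass_push (κ : ∀ q, CC k q) (hκ : ∀ q x A, x ∈ A → κ q x A ∈ A)
    (A : Finset (Fin k → ℕ)) (h : ℕ → ℕ)
    (hmono : ∀ a ∈ fld A, ∀ b ∈ fld A, a < b → h a < h b)
    {x : Fin k → ℕ} (hx : x ∈ A) :
    (Vass κ hκ).U (A.image fun v i => h (v i)) (fun i => h (x i)) =
      fun i => h ((Vass κ hκ).U A x i) := by
  set B : Finset (Fin k → ℕ) := A.image (fun v i => h (v i)) with hB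
  have hinj : Set.InjOn h ↑(fld A) := injOn_of_mono hmono
  have hfB : fld B = (fld A).image h := fld_image A h hB
  have hcB : (fld B).card = (fld A).card := by
    rw [hfB, Finset.card_image_of_injOn hinj]
  have henum : ∀ j : Fin (fld B).card, enum B j = h (enum A (Fin.cast hcB j)) := by
    intro j
    have e1 : enum B j = ((fld A).image h).orderEmbOfFin
        (by rw [← hfB]; exact hcB) (Fin.cast hcB j) :=
      emb_congr rfl _ hfB rfl
    rw [e1, enum_image A h hmono]
  have hpull : ∀ {v : Fin k → ℕ} (hv : v ∈ A) (hv' : (fun i => h (v i)) ∈ B) (i : Fin k),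
      ((pull B hv' i : ℕ)) = ((pull A hv i : ℕ)) := by
    intro v hv hv' i
    have inj := ((fld B).orderEmbOfFin rfl).injective
    have e1 : enum B (pull B hv' i) = h (v i) := enum_pull B hv' i
    have e2 : enum B (Fin.cast hcB.symm (pull A hv i)) = h (v i) := by
      rw [henum]
      congr 1
      rw [show Fin.cast hcB (Fin.cast hcB.symm (pull A hv i)) = pull A hv i from rfl]
      exact enum_pull A hv i
    have : pull B hv' i = Fin.cast hcB.symm (pull A hv i) := inj (e1.trans e2.symm)
    rw [this]; rfl
  have hps : pullSet B = (pullSet A).image (fun v j => Fin.cast hcB.symm (v j)) := by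
    ext y
    constructor
    · intro hy
      obtain ⟨z, hz, rfl⟩ := pullSet_recover hy
      obtain ⟨v, hv, rfl⟩ := Finset.mem_image.mp (hB ▸ hz)
      refine Finset.mem_image.mpr ⟨pull A hv, pull_mem A hv, ?_⟩
      funext i
      exact Fin.ext (hpull hv hz i).symm
    · intro hy
      obtain ⟨w, hw, rfl⟩ := Finset.mem_image.mp hy
      obtain ⟨v, hv, rfl⟩ := pullSet_recover hw
      have hv' : (fun i => h (v i)) ∈ B := hB ▸ Finset.mem_image_of_mem _ hv
      have : (fun j => Fin.cast hcB.symm (pull A hv j)) = pull B hv' := by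
        funext i
        exact Fin.ext (hpull hv hv' i).symm
      rw [this]
      exact pull_mem B hv'
  have hxB : (fun i => h (x i)) ∈ B := hB ▸ Finset.mem_image_of_mem _ hx
  rw [Vass_apply κ hκ hxB, Vass_apply κ hκ hx]
  funext i
  rw [henum]
  congr 1
  have h1 : pull B hxB = fun j => Fin.cast hcB.symm (pull A hx j) := by
    funext j
    exact Fin.ext (hpull hx hxB j)
  apply (enum_strictMono A).injective.eq_iff.mpr
  apply Fin.ext
  show ((Fin.cast hcB (κ (fld B).card (pull B hxB) (pullSet B) i) : ℕ)) = _
  rw [show ((Fin.cast hcB (κ (fld B).card (pull B hxB) (pullSet B) i) : ℕ))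
      = ((κ (fld B).card (pull B hxB) (pullSet B) i : ℕ)) from rfl]
  rw [h1, hps]
  exact kappa_cast κ hcB.symm (pull A hx) (pullSet A) i

end VV

/-! ### The order preserving maps used in `RestrIso` -/

section Hmap

variable {α : Type*} [LinearOrder α]

noncomputable def hmap (S : Finset ℕ) (T : Finset α) (hT : T.card = S.card)
    (y₀ : α) : ℕ → α := fun a =>
  if ha : a ∈ S then T.orderEmbOfFin hT ((S.orderIsoOfFin rfl).symm ⟨a, ha⟩) else y₀

lemma hmap_lt_iff (S : Finset ℕ) (T : Finset α) (hT : T.card = S.card) (y₀ : α)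
    {a b : ℕ} (ha : a ∈ S) (hb : b ∈ S) :
    a < b ↔ hmap S T hT y₀ a < hmap S T hT y₀ b := by
  unfold hmap
  rw [dif_pos ha, dif_pos hb, OrderEmbedding.lt_iff_lt, OrderIso.lt_iff_lt,
    Subtype.mk_lt_mk]

lemma hmap_mem (S : Finset ℕ) (T : Finset α) (hT : T.card = S.card) (y₀ : α)
    {a : ℕ} (ha : a ∈ S) : hmap S T hT y₀ a ∈ T := by
  unfold hmap
  rw [dif_pos ha]
  exact Finset.orderEmbOfFin_mem _ _ _

lemma hmap_image (S : Finset ℕ) (T : Finset α) (hT : T.card = S.card) (y₀ : α) :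
    hmap S T hT y₀ '' ↑S = ↑T := by
  apply Set.Subset.antisymm
  · rintro _ ⟨a, ha, rfl⟩
    exact hmap_mem S T hT y₀ ha
  · intro c hc
    have : c ∈ Set.range (T.orderEmbOfFin hT) := by
      rw [Finset.range_orderEmbOfFin]; exact hc
    obtain ⟨j, hj⟩ := this
    refine ⟨((S.orderIsoOfFin rfl) j : ℕ), ((S.orderIsoOfFin rfl) j).2, ?_⟩
    unfold hmap
    rw [dif_pos (((S.orderIsoOfFin rfl) j).2)]
    rw [show (⟨((S.orderIsoOfFin rfl) j : ℕ), ((S.orderIsoOfFin rfl) j).2⟩ :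
        {a // a ∈ S}) = (S.orderIsoOfFin rfl) j from rfl]
    rw [OrderIso.symm_apply_apply]
    exact hj

end Hmap

lemma image_det {β γ : Type*} [DecidableEq γ] (f : β → γ) (A : Finset β) (B : Finset γ)
    (hB : f '' ↑A = ↑B) : B = A.image f := by
  apply Finset.coe_injective
  rw [Finset.coe_image, hB]

/-! ### Uniformity of `Vass` -/

lemma Vass_uniform {k : ℕ} (κ : ∀ q, CC k q)
    (hκ : ∀ q x A, x ∈ A → κ q x A ∈ A) : Uniform (Vass κ hκ) := by
  intro S T hST
  refine ⟨hmap S T hST.symm 0,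
    fun a ha b hb => hmap_lt_iff S T hST.symm 0 ha hb,
    hmap_image S T hST.symm 0, ?_⟩
  intro A hA B hB x hx
  have hBA : B = A.image (fun v i => hmap S T hST.symm 0 (v i)) :=
    image_det _ A B hB
  have hmono : ∀ a ∈ fld A, ∀ b ∈ fld A, a < b →
      hmap S T hST.symm 0 a < hmap S T hST.symm 0 b := fun a ha' b hb' hab =>
    (hmap_lt_iff S T hST.symm 0 (fld_subset hA ha') (fld_subset hA hb')).mp hab
  rw [hBA]
  exact Vass_push κ hκ A (hmap S T hST.symm 0) hmono hx

/-! ### The homogeneous sequence from Ramsey's theorem -/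

section Main

variable {X : Type*} [LinearOrder X] [Infinite X] {k : ℕ} (L : FunAssign (Fin k → X))

noncomputable def Zseq : ℕ → {s : Set X // s.Infinite}
  | 0 => ⟨Set.univ, Set.infinite_univ⟩
  | p+1 => ⟨(my_ramsey (p+1) (colF L (p+1)) (Zseq p).1 (Zseq p).2).choose,
      (my_ramsey (p+1) (colF L (p+1)) (Zseq p).1 (Zseq p).2).choose_spec.2.1⟩

lemma Zseq_sub (p : ℕ) : (Zseq L (p+1)).1 ⊆ (Zseq L p).1 :=
  (my_ramsey (p+1) (colF L (p+1)) (Zseq L p).1 (Zseq L p).2).choose_spec.1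

lemma Zseq_hom (p : ℕ) : ∀ A B : Finset X, ↑A ⊆ (Zseq L (p+1)).1 →
    ↑B ⊆ (Zseq L (p+1)).1 → A.card = p+1 → B.card = p+1 →
    colF L (p+1) A = colF L (p+1) B :=
  (my_ramsey (p+1) (colF L (p+1)) (Zseq L p).1 (Zseq L p).2).choose_spec.2.2

lemma Zseq_mono {m n : ℕ} (h : m ≤ n) : (Zseq L n).1 ⊆ (Zseq L m).1 := by
  obtain ⟨j, rfl⟩ := Nat.exists_eq_add_of_le h
  induction j with
  | zero => exact subset_rfl
  | succ j ih => exact (Zseq_sub L (m+j)).trans (ih (by omega))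

noncomputable def dFin : ℕ → Finset X
  | 0 => ∅
  | n+1 => insert (((Zseq L n).2.diff (dFin n).finite_toSet).nonempty.choose) (dFin n)

noncomputable def dd (n : ℕ) : X :=
  ((Zseq L n).2.diff (dFin L n).finite_toSet).nonempty.choose

lemma dd_spec (n : ℕ) : dd L n ∈ (Zseq L n).1 \ ↑(dFin L n) :=
  ((Zseq L n).2.diff (dFin L n).finite_toSet).nonempty.choose_spec

lemma dFin_succ (n : ℕ) : dFin L (n+1) = insert (dd L n) (dFin L n) := rfl

lemma mem_dFin {m n : ℕ} (h : m < n) : dd L m ∈ dFin L n := by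
  induction n with
  | zero => omega
  | succ n ih =>
    rw [dFin_succ]
    rcases Nat.lt_or_ge m n with h' | h'
    · exact Finset.mem_insert_of_mem (ih h')
    · have : m = n := by omega
      subst this
      exact Finset.mem_insert_self _ _

lemma dd_inj : Function.Injective (dd L) := by
  intro m n h
  by_contra hne
  rcases lt_or_gt_of_ne hne with h' | h'
  · exact (dd_spec L n).2 (by rw [← h]; exact_mod_cast mem_dFin L h')
  · exact (dd_spec L m).2 (by rw [h]; exact_mod_cast mem_dFin L h')

lemma dd_mem_Zseq {q n : ℕ} (h : q ≤ n) : dd L n ∈ (Zseq L q).1 :=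
  Zseq_mono L h (dd_spec L n).1

/-- The canonical `q`-point subset deep in the homogeneous sequence. -/
noncomputable def Pq (q : ℕ) : Finset X :=
  (Finset.range q).image fun i => dd L (q + i)

lemma Pq_card (q : ℕ) : (Pq L q).card = q := by
  rw [Pq, Finset.card_image_of_injOn, Finset.card_range]
  intro a _ b _ h
  have := dd_inj L h
  omega

lemma Pq_tail (q : ℕ) : ↑(Pq L q) ⊆ dd L '' {i | q ≤ i} := by
  intro a ha
  rw [Pq] at ha
  simp only [Finset.coe_image, Set.mem_image, Finset.mem_coe, Finset.mem_range] at ha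
  obtain ⟨i, _, rfl⟩ := ha
  exact ⟨q + i, by simp, rfl⟩

lemma Hom (q : ℕ) (P : Finset X) (hP : ↑P ⊆ dd L '' {i | q ≤ i})
    (hPc : P.card = q) : colF L q P = colF L q (Pq L q) := by
  cases q with
  | zero =>
    have h1 : P = ∅ := Finset.card_eq_zero.mp hPc
    have h2 : Pq L 0 = ∅ := by
      rw [← Finset.card_eq_zero, Pq_card]
    rw [h1, h2]
  | succ p =>
    apply Zseq_hom L p P (Pq L (p+1)) ?_ ?_ hPc (Pq_card L (p+1))
    · intro a ha
      obtain ⟨i, hi, rfl⟩ := hP ha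
      exact dd_mem_Zseq L hi
    · intro a ha
      obtain ⟨i, hi, rfl⟩ := Pq_tail L (p+1) ha
      exact dd_mem_Zseq L hi

/-- The homogeneous family of types. -/
noncomputable def kfam (q : ℕ) : CC k q := colF L q (Pq L q)

lemma kfam_mem : ∀ q (x : Fin k → Fin q) (A : Finset (Fin k → Fin q)),
    x ∈ A → kfam L q x A ∈ A := fun _ _ _ hx => colF_mem L _ hx

lemma Vass_conserv : FinConservativeOver (Vass (kfam L) (kfam_mem L)) L := by
  intro S
  have hNX : Nonempty X := inferInstance
  set n₀ := S.card with hn₀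
  set T : Finset X := Pq L n₀ with hT
  have hTc : T.card = n₀ := Pq_card L n₀
  set h : ℕ → X := hmap S T hTc (Classical.arbitrary X) with hh
  refine ⟨T, h, fun a ha b hb => hmap_lt_iff S T hTc _ ha hb,
    hmap_image S T hTc _, ?_⟩
  intro A hA B hB x hx
  have hBA : B = A.image (fun v i => h (v i)) := image_det _ A B hB
  have hFS : fld A ⊆ S := fld_subset hA
  have hmono : ∀ a ∈ fld A, ∀ b ∈ fld A, a < b → h a < h b := fun a ha' b hb' hab =>
    (hmap_lt_iff S T hTc _ (hFS ha') (hFS hb')).mp hab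
  set q := (fld A).card with hq
  set G : Finset X := (fld A).image h with hG
  have hGc : G.card = q := Finset.card_image_of_injOn (injOn_of_mono hmono)
  have hGtail : ↑G ⊆ dd L '' {i | q ≤ i} := by
    intro a ha
    rw [hG] at ha
    simp only [Finset.coe_image, Set.mem_image, Finset.mem_coe] at ha
    obtain ⟨b, hb, rfl⟩ := ha
    have hbT : h b ∈ T := hmap_mem S T hTc _ (hFS hb)
    obtain ⟨i, hi, he⟩ := Pq_tail L n₀ hbT
    refine ⟨i, ?_, he⟩
    have hqn : q ≤ n₀ := hn₀ ▸ Finset.card_le_card hFS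
    exact le_trans hqn hi
  have hcol : colF L q G = kfam L q := Hom L q G hGtail hGc
  have hx' : pull A hx ∈ pullSet A := pull_mem A hx
  have spec := colF_spec L G hGc hx'
  -- identify the enumeration of G with h ∘ enum A
  have hge : ∀ j : Fin q, G.orderEmbOfFin hGc j = h (enum A j) := fun j =>
    enum_image A h hmono hGc j
  -- identify the three pieces
  have piece1 : (fun i => G.orderEmbOfFin hGc (pull A hx i)) = h ∘ x := by
    funext i
    rw [hge, enum_pull A hx i]
    rfl
  have piece2 : (pullSet A).image (fun v i => G.orderEmbOfFin hGc (v i)) = B := by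
    rw [hBA, pullSet, Finset.image_image]
    have : ∀ z : {w // w ∈ A},
        (fun i => G.orderEmbOfFin hGc (pull A z.2 i)) = (fun i => h (z.1 i)) := by
      intro z
      funext i
      rw [hge, enum_pull A z.2 i]
    calc A.attach.image ((fun v i => G.orderEmbOfFin hGc (v i)) ∘ fun z => pull A z.2)
        = A.attach.image (fun z => fun i => h (z.1 i)) := by
          apply Finset.image_congr
          intro z _
          exact this z
      _ = (A.attach.image Subtype.val).image (fun v i => h (v i)) := by
          rw [Finset.image_image]
          rfl
      _ = A.image (fun v i => h (v i)) := by rw [Finset.attach_image_val]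
  have piece3 : (fun i => G.orderEmbOfFin hGc (colF L q G (pull A hx) (pullSet A) i)) =
      h ∘ ((Vass (kfam L) (kfam_mem L)).U A x) := by
    rw [Vass_apply (kfam L) (kfam_mem L) hx]
    funext i
    rw [hge, hcol]
    rfl
  rw [← piece3, spec, piece2, ← piece1]

end Main

/-- Theorem 4.2: every infinite linearly ordered function assignment has an
infinite uniform one, on `ℕ^k` with the usual ordering, finitely conservative
over it. -/
theorem stmt_12 {X : Type*} [LinearOrder X] [Infinite X] (k : ℕ) (hk : 0 < k)
    (L : FunAssign (Fin k → X)) :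
    ∃ V : FunAssign (Fin k → ℕ), Uniform V ∧ FinConservativeOver V L :=
  ⟨Vass (kfam L) (kfam_mem L), Vass_uniform _ _, Vass_conserv L⟩
end

section
/- Every #-decreasing well ordered function assignment has a unique direct completion. That is, if (X^k, ≤, U) is a linearly ordered function assignment with ≤ a well ordering and U #-decreasing with respect to the sup norm of ≤, then there is exactly one function f: X^k → X^k such that for every finite A ⊆ X^k there exists a finite B ⊇ A with the graph of U(B) contained in f. -/
/-- The sup norm `|x|` of `x ∈ X^k`, `k > 0`. -/
def vmax {X : Type*} [LinearOrder X] {k : ℕ} (hk : 0 < k) (x : Fin k → X) : X :=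
  Finset.univ.sup' (Finset.univ_nonempty_iff.mpr ⟨⟨0, hk⟩⟩) x

/-- A linearly ordered function assignment is #-decreasing: inserting a point
`x` either extends the function or makes it drop (in sup norm) at some point
of sup norm `> |x|`. -/
def SharpDecreasingLofa {X : Type*} [LinearOrder X] {k : ℕ} (hk : 0 < k)
    (L : FunAssign (Fin k → X)) : Prop :=
  ∀ (A : Finset (Fin k → X)) (x : Fin k → X),
    (∀ y ∈ A, L.U A y = L.U (insert x A) y) ∨
    ∃ y ∈ A, vmax hk x < vmax hk y ∧
      vmax hk (L.U (insert x A) y) < vmax hk (L.U A y)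

/-- `f : X^k → X^k` is a direct completion of `L`: every finite `A ⊆ X^k` has
a finite superset `B` with the graph of `L.U B` contained in `f`. -/
def IsDirectCompletion {X : Type*} [LinearOrder X] {k : ℕ}
    (L : FunAssign (Fin k → X)) (f : (Fin k → X) → (Fin k → X)) : Prop :=
  ∀ A : Finset (Fin k → X), ∃ B : Finset (Fin k → X), A ⊆ B ∧
    ∀ x ∈ B, f x = L.U B x

section

open Finset

variable {X β : Type*} [LinearOrder X]

def EqOrLT (nv : β → X) (a b : β) : Prop := a = b ∨ nv a < nv b

namespace EqOrLT

variable {nv : β → X} {a b c : β}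

theorem trans (hab : EqOrLT nv a b) (hbc : EqOrLT nv b c) : EqOrLT nv a c := by
  rcases hab with rfl | hab
  · exact hbc
  rcases hbc with rfl | hbc
  · exact Or.inr hab
  · exact Or.inr (hab.trans hbc)

theorem antisymm (hab : EqOrLT nv a b) (hba : EqOrLT nv b a) : a = b := by
  rcases hab with rfl | hab
  · rfl
  rcases hba with rfl | hba
  · rfl
  · exact absurd (hab.trans hba) (lt_irrefl _)

end EqOrLT

def lowerPart (nv : β → X) (A : Finset β) (w : X) : Finset β := {a ∈ A | nv a < w}

@[simp]
theorem mem_lowerPart {nv : β → X} {A : Finset β} {w : X} {a : β} :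
    a ∈ lowerPart nv A w ↔ a ∈ A ∧ nv a < w :=
  mem_filter

theorem lowerPart_ssubset {nv : β → X} {A : Finset β} {y : β} (hy : y ∈ A) :
    lowerPart nv A (nv y) ⊂ A :=
  filter_ssubset.2 ⟨y, hy, lt_irrefl _⟩

variable [DecidableEq β]

theorem lowerPart_union (nv : β → X) (A B : Finset β) (w : X) :
    lowerPart nv (A ∪ B) w = lowerPart nv A w ∪ lowerPart nv B w :=
  filter_union _ _ _

namespace FunAssign

variable (L : FunAssign β) (nv : β → X)

def SharpDecreasing : Prop :=
  ∀ (A : Finset β) (x : β), (∀ y ∈ A, L.U A y = L.U (insert x A) y) ∨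
    ∃ y ∈ A, nv x < nv y ∧ nv (L.U (insert x A) y) < nv (L.U A y)

def Extends (A B : Finset β) : Prop := A ⊆ B ∧ ∀ x ∈ A, L.U B x = L.U A x

def Agrees (f : β → β) (B : Finset β) : Prop := ∀ x ∈ B, f x = L.U B x

def ExtensionDecreasing (B : Finset β) : Prop :=
  ∀ (A : Finset β) (p : β), L.Extends A B → (∀ b ∈ B, nv b < nv p) →
    EqOrLT nv (L.U (insert p B) p) (L.U (insert p A) p)

namespace SharpDecreasing

variable {L nv} (hL : L.SharpDecreasing nv)
include hL

theorem U_insert_eq_of_forall_le {A : Finset β} {x : β} (hx : ∀ y ∈ A, nv y ≤ nv x) :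
    ∀ y ∈ A, L.U (insert x A) y = L.U A y := by
  rcases hL A x with h | ⟨y, hy, hxy, -⟩
  · exact fun y hy => (h y hy).symm
  · exact absurd (hx y hy) (not_le.2 hxy)

theorem U_eq_U_insert_lowerPart {A : Finset β} {y : β} (hy : y ∈ A) :
    L.U A y = L.U (insert y (lowerPart nv A (nv y))) y := by
  set T := insert y (lowerPart nv A (nv y))
  have hyT : y ∈ T := mem_insert_self _ _
  have key : ∀ D : Finset β, (∀ d ∈ D, ∀ t ∈ T, nv t ≤ nv d) → L.U (D ∪ T) y = L.U T y := by
    intro D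
    induction D using Finset.induction_on_max_value nv with
    | empty => simp
    | insert a D _ hmax ih =>
      intro hDT
      have hle : ∀ z ∈ D ∪ T, nv z ≤ nv a := by
        simp only [mem_union]
        rintro z (hz | hz)
        exacts [hmax z hz, hDT a (mem_insert_self _ _) z hz]
      rw [insert_union, hL.U_insert_eq_of_forall_le hle y (mem_union_right _ hyT),
        ih fun d hd => hDT d (mem_insert_of_mem hd)]
  have hA : A = {a ∈ A | nv y ≤ nv a} ∪ T := by
    ext a
    simp only [T, mem_union, mem_filter, mem_insert, mem_lowerPart]
    constructor
    · intro ha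
      rcases le_or_gt (nv y) (nv a) with h | h
      exacts [Or.inl ⟨ha, h⟩, Or.inr (Or.inr ⟨ha, h⟩)]
    · rintro (⟨ha, -⟩ | rfl | ⟨ha, -⟩) <;> assumption
  conv_lhs => rw [hA]
  refine key _ fun d hd t ht => ?_
  rcases mem_insert.1 ht with rfl | ht
  exacts [(mem_filter.1 hd).2, ((mem_lowerPart.1 ht).2.trans_le (mem_filter.1 hd).2).le]

theorem U_eq_of_lowerPart_eq {A B : Finset β} {y : β} (hA : y ∈ A) (hB : y ∈ B)
    (h : lowerPart nv A (nv y) = lowerPart nv B (nv y)) : L.U A y = L.U B y := by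
  rw [hL.U_eq_U_insert_lowerPart hA, hL.U_eq_U_insert_lowerPart hB, h]

theorem U_lowerPart {A : Finset β} {w : X} {y : β} (hy : y ∈ lowerPart nv A w) :
    L.U (lowerPart nv A w) y = L.U A y := by
  refine hL.U_eq_of_lowerPart_eq hy (mem_lowerPart.1 hy).1 ?_
  ext a
  simp only [mem_lowerPart, and_assoc]
  exact and_congr_right fun _ => and_iff_right_of_imp fun h => h.trans (mem_lowerPart.1 hy).2

theorem U_insert_of_not_lt {A : Finset β} {p y : β} (hy : y ∈ A) (hp : ¬ nv p < nv y) :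
    L.U (insert p A) y = L.U A y :=
  hL.U_eq_of_lowerPart_eq (mem_insert_of_mem hy) hy (by simp only [lowerPart, filter_insert, hp,
    if_false])

theorem agrees_lowerPart {f : β → β} {A : Finset β} (hA : L.Agrees f A) (w : X) :
    L.Agrees f (lowerPart nv A w) := fun x hx => by
  rw [hL.U_lowerPart hx]
  exact hA x (mem_lowerPart.1 hx).1

theorem extends_lowerPart {A B : Finset β} {w : X} (hAB : A ⊆ B)
    (h : ∀ x ∈ A, nv x < w → L.U B x = L.U A x) :
    L.Extends (lowerPart nv A w) (lowerPart nv B w) := by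
  refine ⟨filter_subset_filter _ hAB, fun x hx => ?_⟩
  obtain ⟨hxA, hxw⟩ := mem_lowerPart.1 hx
  rw [hL.U_lowerPart (mem_lowerPart.2 ⟨hAB hxA, hxw⟩), hL.U_lowerPart hx, h x hxA hxw]

theorem eqOrLT_of_extends_insert {C : Finset β} {d p : β} (h : L.Extends C (insert d C))
    (hp : ∀ b ∈ insert d C, nv b < nv p) :
    EqOrLT nv (L.U (insert p (insert d C)) p) (L.U (insert p C) p) := by
  have hswap : insert d (insert p C) = insert p (insert d C) := insert_comm d p C
  rcases hL (insert p C) d with hext | ⟨w, hw, -, hdrop⟩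
  · exact Or.inl (by rw [hext p (mem_insert_self _ _), hswap])
  rw [hswap] at hdrop
  rcases mem_insert.1 hw with rfl | hwC
  · exact Or.inr hdrop
  have hpw : ¬ nv p < nv w := (hp w (mem_insert_of_mem hwC)).asymm
  rw [hL.U_insert_of_not_lt (mem_insert_of_mem hwC) hpw, hL.U_insert_of_not_lt hwC hpw,
    h.2 w hwC] at hdrop
  exact absurd hdrop (lt_irrefl _)

variable [WellFoundedLT X]

theorem extends_erase_of_forall_le {A B : Finset β} {d : β}
    (hM : ∀ C ⊂ B, L.ExtensionDecreasing nv C) (h : L.Extends A B) (hdB : d ∈ B) (hdA : d ∉ A)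
    (hmax : ∀ x ∈ B, x ∉ A → nv x ≤ nv d) : L.Extends (B.erase d) B := by
  refine ⟨erase_subset d B, fun v hv => ?_⟩
  induction v using (InvImage.wf nv wellFounded_lt).induction with
  | _ v ih =>
  obtain ⟨-, hvB⟩ := mem_erase.1 hv
  by_cases hvA : v ∈ A
  swap
  -- `d` is not below `v`, so removing it leaves the lower part of `v` unchanged
  · refine hL.U_eq_of_lowerPart_eq hvB hv (ext fun a => ?_)
    simp only [mem_lowerPart, mem_erase]
    refine ⟨fun ⟨haB, hav⟩ => ⟨⟨?_, haB⟩, hav⟩, fun h => ⟨h.1.2, h.2⟩⟩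
    rintro rfl
    exact (hav.trans_le (hmax v hvB hvA)).false
  have hAB' : A ⊆ B.erase d := fun x hx => mem_erase.2 ⟨ne_of_mem_of_not_mem hx hdA, h.1 hx⟩
  have h₁ : L.Extends (lowerPart nv A (nv v)) (lowerPart nv (B.erase d) (nv v)) :=
    hL.extends_lowerPart hAB' fun x hx hxv => by rw [← ih x hxv (hAB' hx), h.2 x hx]
  have h₂ : L.Extends (lowerPart nv (B.erase d) (nv v)) (lowerPart nv B (nv v)) :=
    hL.extends_lowerPart (erase_subset d B) fun x hx hxv => ih x hxv hx
  have hlow : ∀ C : Finset β, ∀ b ∈ lowerPart nv C (nv v), nv b < nv v :=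
    fun C b hb => (mem_lowerPart.1 hb).2
  have k₁ := hM (lowerPart nv (B.erase d) (nv v))
    ((filter_subset _ _).trans_ssubset (erase_ssubset hdB)) _ v h₁ (hlow _)
  have k₂ := hM _ (lowerPart_ssubset hvB) _ v h₂ (hlow _)
  rw [← hL.U_eq_U_insert_lowerPart hv, ← hL.U_eq_U_insert_lowerPart hvA] at k₁
  rw [← hL.U_eq_U_insert_lowerPart hvB, ← hL.U_eq_U_insert_lowerPart hv, h.2 v hvA] at k₂
  -- the value at `v` can only drop from `U A` to `U (B.erase d)` to `U B`, and `U B v = U A v`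
  rw [h.2 v hvA]
  exact k₂.antisymm k₁

theorem extensionDecreasing (B : Finset β) : L.ExtensionDecreasing nv B := by
  induction B using Finset.strongInduction with
  | H B ih =>
  intro A p h hp
  by_cases hBA : B ⊆ A
  · rw [subset_antisymm hBA h.1]
    exact Or.inl rfl
  obtain ⟨d, hd, hmax⟩ := exists_max_image (B \ A) nv (sdiff_nonempty.2 hBA)
  obtain ⟨hdB, hdA⟩ := mem_sdiff.1 hd
  have hB' : L.Extends (B.erase d) B :=
    hL.extends_erase_of_forall_le ih h hdB hdA fun x hx hxA => hmax x (mem_sdiff.2 ⟨hx, hxA⟩)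
  have hAB : A ⊆ B.erase d := fun x hx => mem_erase.2 ⟨ne_of_mem_of_not_mem hx hdA, h.1 hx⟩
  have hAB' : L.Extends A (B.erase d) := ⟨hAB, fun x hx => by rw [← hB'.2 x (hAB hx), h.2 x hx]⟩
  have hstep := hL.eqOrLT_of_extends_insert (C := B.erase d) (d := d) (p := p)
    (by rwa [insert_erase hdB]) (by rwa [insert_erase hdB])
  rw [insert_erase hdB] at hstep
  exact hstep.trans (ih _ (erase_ssubset hdB) A p hAB' fun b hb => hp b (mem_of_mem_erase hb))

end SharpDecreasing

variable [WellFoundedLT X]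

/-- A set of points below `p` on which `U` agrees with the completion (already defined there by
recursion), chosen so that the value it gives to `p` has minimal norm; that value is the
completion at `p`. -/
noncomputable def support : β → Finset β :=
  (InvImage.wf nv wellFounded_lt).fix fun p S =>
    Function.argminOn (fun E => nv (L.U (insert p E) p))
      {E | ∀ e ∈ E, ∃ h : nv e < nv p, L.U (insert e (S e h)) e = L.U E e} ⟨∅, by simp⟩

noncomputable def completion (p : β) : β := L.U (insert p (L.support nv p)) p

theorem support_eq (p : β) :
    L.support nv p = Function.argminOn (fun E => nv (L.U (insert p E) p))
      {E | ∀ e ∈ E, ∃ _ : nv e < nv p, L.completion nv e = L.U E e} ⟨∅, by simp⟩ := by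
  rw [support, WellFounded.fix_eq]
  rfl

theorem support_spec (p : β) :
    ∀ e ∈ L.support nv p, ∃ _ : nv e < nv p, L.completion nv e = L.U (L.support nv p) e := by
  rw [support_eq]
  exact Function.argminOn_mem _
    (s := {E | ∀ e ∈ E, ∃ _ : nv e < nv p, L.completion nv e = L.U E e}) _

variable {L nv}

theorem support_lt {p e : β} (he : e ∈ L.support nv p) : nv e < nv p :=
  (L.support_spec nv p e he).1

theorem agrees_support (p : β) : L.Agrees (L.completion nv) (L.support nv p) :=
  fun e he => (L.support_spec nv p e he).2

theorem completion_le {p : β} {E : Finset β} (hE : ∀ e ∈ E, nv e < nv p)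
    (hEf : L.Agrees (L.completion nv) E) : nv (L.completion nv p) ≤ nv (L.U (insert p E) p) := by
  rw [completion, support_eq]
  exact Function.argminOn_le (fun E => nv (L.U (insert p E) p)) _ (a := E)
    fun e he => ⟨hE e he, hEf e he⟩

namespace SharpDecreasing

variable (hL : L.SharpDecreasing nv)
include hL

theorem U_insert_eq_completion {p : β} {E F : Finset β} (hE : L.Agrees (L.completion nv) E)
    (hEp : ∀ e ∈ E, nv e < nv p) (hF : L.Agrees (L.completion nv) F) (hFE : F ⊆ E)
    (hFp : L.U (insert p F) p = L.completion nv p) : L.U (insert p E) p = L.completion nv p := by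
  have hext : L.Extends F E := ⟨hFE, fun x hx => by rw [← hE x (hFE hx), hF x hx]⟩
  have hdrop := hL.extensionDecreasing E F p hext hEp
  rw [hFp] at hdrop
  exact hdrop.resolve_right (not_lt.2 (completion_le hEp hE))

theorem agrees_union {B C : Finset β} (hB : L.Agrees (L.completion nv) B)
    (hC : L.Agrees (L.completion nv) C) : L.Agrees (L.completion nv) (B ∪ C) := by
  intro x hx
  induction x using (InvImage.wf nv wellFounded_lt).induction generalizing B C with
  | _ x ih =>
  wlog hxB : x ∈ B generalizing B C
  · rw [union_comm] at hx ⊢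
    exact this hC hB hx ((mem_union.1 hx).resolve_right hxB)
  have hD : L.Agrees (L.completion nv) (lowerPart nv (B ∪ C) (nv x)) := by
    intro y hy
    have hyx := (mem_lowerPart.1 hy).2
    rw [lowerPart_union] at hy ⊢
    exact ih y hyx (hL.agrees_lowerPart hB _) (hL.agrees_lowerPart hC _) hy
  rw [hL.U_eq_U_insert_lowerPart hx]
  refine (hL.U_insert_eq_completion hD (fun y hy => (mem_lowerPart.1 hy).2)
    (hL.agrees_lowerPart hB _) (filter_subset_filter _ subset_union_left) ?_).symm
  rw [← hL.U_eq_U_insert_lowerPart hxB, hB x hxB]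

theorem agrees_insert_support (p : β) :
    L.Agrees (L.completion nv) (insert p (L.support nv p)) := by
  intro x hx
  rcases mem_insert.1 hx with rfl | hx
  · rfl
  · rw [hL.U_insert_of_not_lt hx (support_lt hx).asymm]
    exact agrees_support _ x hx

theorem exists_agrees_completion (A : Finset β) :
    ∃ B, A ⊆ B ∧ L.Agrees (L.completion nv) B := by
  induction A using Finset.induction_on with
  | empty => exact ⟨∅, subset_rfl, by simp [Agrees]⟩
  | insert a A _ ih =>
    obtain ⟨B, hAB, hB⟩ := ih
    exact ⟨insert a (L.support nv a) ∪ B,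
      insert_subset (mem_union_left _ (mem_insert_self _ _)) (hAB.trans subset_union_right),
      hL.agrees_union (hL.agrees_insert_support a) hB⟩

theorem eq_completion {g : β → β} (hg : ∀ A, ∃ B, A ⊆ B ∧ L.Agrees g B) :
    g = L.completion nv := by
  funext x
  induction x using (InvImage.wf nv wellFounded_lt).induction with
  | _ x ih =>
  obtain ⟨C, hAC, hC⟩ := hg (insert x (L.support nv x))
  have hxC : x ∈ C := hAC (mem_insert_self _ _)
  have hD : L.Agrees (L.completion nv) (lowerPart nv C (nv x)) := fun y hy => by
    rw [← ih y (mem_lowerPart.1 hy).2]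
    exact hL.agrees_lowerPart hC _ y hy
  have hsupp : L.support nv x ⊆ lowerPart nv C (nv x) := fun y hy =>
    mem_lowerPart.2 ⟨hAC (mem_insert_of_mem hy), support_lt hy⟩
  rw [hC x hxC, hL.U_eq_U_insert_lowerPart hxC]
  exact hL.U_insert_eq_completion hD (fun y hy => (mem_lowerPart.1 hy).2) (agrees_support x)
    hsupp rfl

end SharpDecreasing
end FunAssign

end

/-- Theorem 4.8: every #-decreasing well ordered function assignment has a
unique direct completion. -/
theorem stmt_14 {X : Type*} [LinearOrder X] [WellFoundedLT X] (k : ℕ)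
    (hk : 0 < k) (L : FunAssign (Fin k → X))
    (hdec : SharpDecreasingLofa hk L) :
    ∃! f : (Fin k → X) → (Fin k → X), IsDirectCompletion L f := by
  have hL : L.SharpDecreasing (vmax hk) := hdec
  exact ⟨L.completion (vmax hk), hL.exists_agrees_completion, fun g hg => hL.eq_completion hg⟩
end
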